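/- arXiv:1311.3789 — 5 statements merged into one kernel-verified Lean document; each statement's English description precedes it below -/
import Mathlib

section
/- Let G = (V, E) be a compact topological packing graph. Then for every t ∈ ℕ the space I_t of independent sets of cardinality at most t is compact; equivalently, I_t is closed in the compact Hausdorff space sub_t(V). -/
/-!
In a packing graph on a Hausdorff space adjacency is an open relation: an open clique
containing an edge `{x, y}`, intersected with disjoint neighbourhoods of `x` and `y`, contains
a product neighbourhood of `(x, y)`. Hence the tuples in `V^t` with independent range form a
closed set, which is the preimage of `I_t` under the quotient map `V^t ⊕ {∅} → sub_t(V)`; so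
`I_t` is closed in `sub_t(V)`, which is compact as a continuous image of a compact space.
-/

open MeasureTheory Set Topology
open scoped NNReal ENNReal

noncomputable section

universe u

variable {V : Type u}

/-- A set of vertices is independent if it spans no edge of `G`. -/
def IndepVerts (G : SimpleGraph V) (S : Set V) : Prop :=
  ∀ ⦃x⦄, x ∈ S → ∀ ⦃y⦄, y ∈ S → ¬ G.Adj x y

/-- A graph on a topological vertex set is a (topological) packing graph if every finite
clique is contained in an open clique. -/
def IsPackingGraph [TopologicalSpace V] (G : SimpleGraph V) : Prop :=
  ∀ S : Set V, S.Finite → G.IsClique S → ∃ U : Set V, IsOpen U ∧ S ⊆ U ∧ G.IsClique U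

/-- The independence number: the supremum of cardinalities of (finite) independent sets. -/
def alphaNat (G : SimpleGraph V) : ℕ :=
  sSup {n : ℕ | ∃ S : Set V, IndepVerts G S ∧ S.Finite ∧ S.ncard = n}

/-- `sub_t(V)`: the subsets of `V` of cardinality at most `t`. -/
def SubAtMost (V : Type u) (t : ℕ) : Type u := {S : Set V // S.Finite ∧ S.ncard ≤ t}

/-- The map realizing `sub_t(V)` as a quotient of `V^t ⊕ {∅}`. -/
def qMap (V : Type u) (t : ℕ) : ((Fin t → V) ⊕ Unit) → SubAtMost V t
  | Sum.inl f => ⟨Set.range f, Set.finite_range f, by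
      rw [← Set.image_univ]
      refine le_trans (Set.ncard_image_le Set.finite_univ) ?_
      simp [Set.ncard_univ]⟩
  | Sum.inr _ => ⟨∅, Set.finite_empty, by simp⟩

/-- `sub_t(V)` carries the quotient topology of `V^t ⊕ {∅}` (product topology on `V^t`,
empty set adjoined via the disjoint union topology). -/
instance [TopologicalSpace V] (t : ℕ) : TopologicalSpace (SubAtMost V t) :=
  TopologicalSpace.coinduced (qMap V t) inferInstance

instance [TopologicalSpace V] (t : ℕ) : MeasurableSpace (SubAtMost V t) := borel _

/-- `I_t`: the independent sets of cardinality at most `t`, as a subspace of `sub_t(V)`. -/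
def IndepSpace [TopologicalSpace V] (G : SimpleGraph V) (t : ℕ) : Type u :=
  {S : SubAtMost V t // IndepVerts G S.1}

instance [TopologicalSpace V] (G : SimpleGraph V) (t : ℕ) :
    TopologicalSpace (IndepSpace G t) := by unfold IndepSpace; infer_instance

instance [TopologicalSpace V] (G : SimpleGraph V) (t : ℕ) :
    MeasurableSpace (IndepSpace G t) := by unfold IndepSpace; infer_instance

/-- The empty set as an element of `I_t`. -/
def emptyIndep [TopologicalSpace V] (G : SimpleGraph V) (t : ℕ) : IndepSpace G t :=
  ⟨⟨(∅ : Set V), Set.finite_empty, by simp⟩, by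
    intro x hx; exact absurd hx (Set.notMem_empty x)⟩

/-- A continuous kernel is positive definite if it is symmetric and all its finite
evaluation matrices are positive semidefinite. -/
def IsPosDefKernel {X : Type*} [TopologicalSpace X] (K : C(X × X, ℝ)) : Prop :=
  (∀ a b : X, K (a, b) = K (b, a)) ∧
    ∀ (m : ℕ) (x : Fin m → X) (c : Fin m → ℝ),
      0 ≤ ∑ i : Fin m, ∑ j : Fin m, c i * c j * K (x i, x j)

/-- The operator `A_t`, on plain functions: `A_t K (S) = ∑_{J ∪ J' = S} K(J, J')`. -/
def AtFun [TopologicalSpace V] (G : SimpleGraph V) (t : ℕ)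
    (K : IndepSpace G t × IndepSpace G t → ℝ) (S : IndepSpace G (2 * t)) : ℝ :=
  ∑ᶠ (p : IndepSpace G t × IndepSpace G t) (_ : p.1.1.1 ∪ p.2.1.1 = S.1.1), K p

/-- The objective value `λ(I_{=1})` of the generalized Lasserre hierarchy. -/
def lasObj [TopologicalSpace V] (G : SimpleGraph V) (t : ℕ)
    (μ : Measure (IndepSpace G (2 * t))) : ℝ :=
  (μ {S : IndepSpace G (2 * t) | S.1.1.ncard = 1}).toReal

/-- Feasibility for the `t`-th step of the generalized Lasserre hierarchy: `λ` is a
positive Radon measure on `I_{2t}` with `λ({∅}) = 1` and `A_t^* λ ⪰ 0`. -/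
def lasFeasible [TopologicalSpace V] (G : SimpleGraph V) (t : ℕ)
    (μ : Measure (IndepSpace G (2 * t))) : Prop :=
  IsFiniteMeasure μ ∧ μ.Regular ∧ μ {emptyIndep G (2 * t)} = 1 ∧
    ∀ K : C(IndepSpace G t × IndepSpace G t, ℝ), IsPosDefKernel K →
      0 ≤ ∫ S, AtFun G t (fun p => K p) S ∂μ

/-- `las_t(G)`, the value of the `t`-th step of the generalized Lasserre hierarchy. -/
def lasValue [TopologicalSpace V] (G : SimpleGraph V) (t : ℕ) : ℝ :=
  sSup {v : ℝ | ∃ μ : Measure (IndepSpace G (2 * t)), lasFeasible G t μ ∧ v = lasObj G t μ}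

/-- Feasibility for the dual program `las_t(G)^*`. -/
def lasDualFeasible [TopologicalSpace V] (G : SimpleGraph V) (t : ℕ)
    (K : C(IndepSpace G t × IndepSpace G t, ℝ)) : Prop :=
  IsPosDefKernel K ∧
    ∀ S : IndepSpace G (2 * t), S ≠ emptyIndep G (2 * t) →
      AtFun G t (fun p => K p) S ≤ if S.1.1.ncard = 1 then -1 else 0

/-- `las_t(G)^*`, the value of the dual of the `t`-th step of the hierarchy. -/
def lasDualValue [TopologicalSpace V] (G : SimpleGraph V) (t : ℕ) : ℝ :=
  sInf {v : ℝ | ∃ K : C(IndepSpace G t × IndepSpace G t, ℝ),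
    lasDualFeasible G t K ∧ v = K (emptyIndep G t, emptyIndep G t)}

lemma Set.Finite.exists_range_fin_eq {α : Type*} {S : Set α} (hS : S.Finite) (hne : S.Nonempty)
    {t : ℕ} (ht : S.ncard ≤ t) : ∃ f : Fin t → α, range f = S := by
  have := hS.to_subtype
  have := hne.to_subtype
  obtain ⟨g, hg⟩ := Function.exists_surjective_iff.2 ⟨inferInstance,
    ⟨(Finite.equivFinOfCardEq (Nat.card_coe_set_eq S)).toEmbedding.trans (Fin.castLEEmb ht)⟩⟩
  exact ⟨(↑) ∘ g, by rw [range_comp, hg.range_eq, image_univ, Subtype.range_coe]⟩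

lemma qMap_surjective (t : ℕ) : Function.Surjective (qMap V t) := by
  rintro ⟨S, hS, ht⟩
  rcases S.eq_empty_or_nonempty with rfl | hne
  · exact ⟨Sum.inr (), rfl⟩
  · obtain ⟨f, rfl⟩ := hS.exists_range_fin_eq hne ht
    exact ⟨Sum.inl f, rfl⟩

instance [TopologicalSpace V] [CompactSpace V] (t : ℕ) : CompactSpace (SubAtMost V t) :=
  (qMap_surjective t).compactSpace continuous_coinduced_rng

lemma IsPackingGraph.isOpen_setOf_adj [TopologicalSpace V] [T2Space V] {G : SimpleGraph V}
    (hG : IsPackingGraph G) : IsOpen {p : V × V | G.Adj p.1 p.2} := by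
  rw [isOpen_iff_mem_nhds]
  rintro ⟨x, y⟩ (hxy : G.Adj x y)
  obtain ⟨U, hU, hxyU, hUclique⟩ :=
    hG {x, y} (toFinite _) (SimpleGraph.isClique_pair.2 fun _ ↦ hxy)
  obtain ⟨Ux, Uy, hUx, hUy, hx, hy, hdisj⟩ := t2_separation hxy.ne
  filter_upwards [prod_mem_nhds ((hU.inter hUx).mem_nhds ⟨hxyU (by simp), hx⟩)
    ((hU.inter hUy).mem_nhds ⟨hxyU (by simp), hy⟩)]
  rintro ⟨a, b⟩ ⟨⟨ha, hax⟩, hb, hby⟩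
  exact hUclique ha hb (hdisj.ne_of_mem hax hby)

lemma indepVerts_range_iff {ι : Type*} {G : SimpleGraph V} {f : ι → V} :
    IndepVerts G (range f) ↔ ∀ i j, ¬ G.Adj (f i) (f j) := by
  simp only [IndepVerts, forall_mem_range]

lemma IsPackingGraph.isClosed_setOf_indepVerts_range [TopologicalSpace V] [T2Space V]
    {G : SimpleGraph V} (hG : IsPackingGraph G) (ι : Type*) :
    IsClosed {f : ι → V | IndepVerts G (range f)} := by
  simp only [indepVerts_range_iff, ofPred_forall]
  refine isClosed_iInter fun i ↦ isClosed_iInter fun j ↦ ?_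
  exact (hG.isOpen_setOf_adj.preimage (f := fun f : ι → V ↦ (f i, f j))
    (by fun_prop)).isClosed_compl

lemma IsPackingGraph.isClosed_setOf_indepVerts [TopologicalSpace V] [T2Space V]
    {G : SimpleGraph V} (hG : IsPackingGraph G) (t : ℕ) :
    IsClosed {S : SubAtMost V t | IndepVerts G S.1} :=
  isClosed_coinduced.2 <|
    isClosed_sum_iff.2 ⟨hG.isClosed_setOf_indepVerts_range (Fin t), isClosed_discrete _⟩

/-- For a compact topological packing graph `G`, the set `I_t` of independent
sets of cardinality at most `t` is closed in the compact Hausdorff space `sub_t(V)`;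
equivalently, the space `I_t` is compact. -/
theorem indepSpace_isClosed_and_compact
    {V : Type u} [TopologicalSpace V] [CompactSpace V] [T2Space V]
    (G : SimpleGraph V) (hG : IsPackingGraph G) (t : ℕ) :
    IsClosed {S : SubAtMost V t | IndepVerts G S.1} ∧ CompactSpace (IndepSpace G t) :=
  ⟨hG.isClosed_setOf_indepVerts t,
    isCompact_iff_compactSpace.1 (hG.isClosed_setOf_indepVerts t).isCompact⟩

end
end

section
/- Let G = (V, E) be a topological packing graph. For every t ∈ ℕ the cardinality map I_t → ℕ, S ↦ |S|, is continuous. In particular, for each t the set I_{=t} of independent sets of cardinality exactly t is both open and closed in I_t. -/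
open MeasureTheory Set Topology
open scoped NNReal ENNReal

noncomputable section

universe u

variable {V : Type u}

/-!
Around an independent set `S` of size `n`, choose pairwise disjoint open cliques `W x`, `x ∈ S`
(Hausdorffness separates the points, the packing property makes the neighbourhoods cliques). The
sets of `sub_t(V)` contained in `⋃ W x` and meeting every `W x` form an open set. An independent
set in it meets each clique `W x` in exactly one point, so it again has `n` elements. Hence every
fibre of the cardinality map is open, which for a map to the discrete space `ℕ` is continuity.
-/

theorem IndepVerts.inter_subsingleton_of_isClique {G : SimpleGraph V} {S U : Set V}
    (hS : IndepVerts G S) (hU : G.IsClique U) : (S ∩ U).Subsingleton := by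
  rintro x ⟨hxS, hxU⟩ y ⟨hyS, hyU⟩
  by_contra hxy
  exact hS hxS hyS (hU hxU hyU hxy)

theorem Set.ncard_eq_of_pairwiseDisjoint {ι α : Type*} {S : Set ι} {W : ι → Set α} {T : Set α}
    (hW : S.PairwiseDisjoint W) (hTsub : T ⊆ ⋃ i ∈ S, W i)
    (hmeet : ∀ i ∈ S, (T ∩ W i).Nonempty) (hsub : ∀ i ∈ S, (T ∩ W i).Subsingleton) :
    T.ncard = S.ncard := by
  choose idx hidxS hidxW using fun a (ha : a ∈ T) => mem_iUnion₂.1 (hTsub ha)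
  refine ncard_congr idx hidxS (fun a b ha hb hab => ?_) (fun i hi => ?_)
  · exact hsub _ (hidxS b hb) ⟨ha, hab ▸ hidxW a ha⟩ ⟨hb, hidxW b hb⟩
  · obtain ⟨a, haT, haW⟩ := hmeet i hi
    exact ⟨a, haT, hW.elim_set (hidxS a haT) hi a (hidxW a haT) haW⟩

theorem IsPackingGraph.exists_isOpen_isClique_mem [TopologicalSpace V]
    {G : SimpleGraph V} (hG : IsPackingGraph G) (x : V) :
    ∃ U : Set V, IsOpen U ∧ x ∈ U ∧ G.IsClique U := by
  obtain ⟨U, hU, hxU, hcl⟩ := hG {x} (finite_singleton x) (SimpleGraph.isClique_singleton x)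
  exact ⟨U, hU, hxU rfl, hcl⟩

theorem IsPackingGraph.exists_pairwiseDisjoint_isOpen_isClique [TopologicalSpace V]
    [T2Space V] {G : SimpleGraph V} (hG : IsPackingGraph G) {S : Set V} (hS : S.Finite) :
    ∃ W : V → Set V, (∀ x, IsOpen (W x) ∧ x ∈ W x ∧ G.IsClique (W x)) ∧ S.PairwiseDisjoint W := by
  obtain ⟨D, hD, hdisj⟩ := hS.t2_separation
  choose U hU hxU hcl using hG.exists_isOpen_isClique_mem
  refine ⟨fun x => U x ∩ D x, fun x => ⟨(hU x).inter (hD x).2, ⟨hxU x, (hD x).1⟩, ?_⟩, ?_⟩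
  · exact (hcl x).subset inter_subset_left
  · exact hdisj.mono fun x => inter_subset_right

namespace SubAtMost

variable [TopologicalSpace V] {t : ℕ} {U : Set V}

theorem isOpen_setOf_subset (hU : IsOpen U) : IsOpen {T : SubAtMost V t | T.1 ⊆ U} := by
  refine isOpen_coinduced.2 (isOpen_sum_iff.2 ⟨?_, isOpen_discrete _⟩)
  have : Sum.inl ⁻¹' (qMap V t ⁻¹' {T | T.1 ⊆ U}) = ⋂ k, (fun f : Fin t → V => f k) ⁻¹' U := by
    ext f
    simp [qMap, range_subset_iff]
  rw [this]
  exact isOpen_iInter_of_finite fun k => hU.preimage (continuous_apply k)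

theorem isOpen_setOf_inter_nonempty (hU : IsOpen U) :
    IsOpen {T : SubAtMost V t | (T.1 ∩ U).Nonempty} := by
  refine isOpen_coinduced.2 (isOpen_sum_iff.2 ⟨?_, isOpen_discrete _⟩)
  have : Sum.inl ⁻¹' (qMap V t ⁻¹' {T | (T.1 ∩ U).Nonempty}) =
      ⋃ k, (fun f : Fin t → V => f k) ⁻¹' U := by
    ext f
    simp [qMap, Set.Nonempty]
  rw [this]
  exact isOpen_iUnion fun k => hU.preimage (continuous_apply k)

end SubAtMost

theorem IsPackingGraph.isOpen_setOf_ncard_eq [TopologicalSpace V] [T2Space V]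
    {G : SimpleGraph V} (hG : IsPackingGraph G) (t n : ℕ) :
    IsOpen {S : IndepSpace G t | S.1.1.ncard = n} := by
  rw [isOpen_iff_forall_mem_open]
  rintro ⟨⟨S, hS, -⟩, -⟩ (rfl : S.ncard = n)
  obtain ⟨W, hW, hdisj⟩ := hG.exists_pairwiseDisjoint_isOpen_isClique hS
  let N : Set (SubAtMost V t) :=
    {T | T.1 ⊆ ⋃ x ∈ S, W x} ∩ ⋂ x ∈ S, {T | (T.1 ∩ W x).Nonempty}
  have hN : IsOpen N :=
    (SubAtMost.isOpen_setOf_subset (isOpen_biUnion fun x _ => (hW x).1)).inter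
      (hS.isOpen_biInter fun x _ => SubAtMost.isOpen_setOf_inter_nonempty (hW x).1)
  refine ⟨Subtype.val ⁻¹' N, ?_, hN.preimage continuous_subtype_val, ?_⟩
  · rintro ⟨T, hTind⟩ ⟨hTsub, hTmeet⟩
    exact ncard_eq_of_pairwiseDisjoint hdisj hTsub (fun x hx => mem_iInter₂.1 hTmeet x hx)
      fun x _ => hTind.inter_subsingleton_of_isClique (hW x).2.2
  · exact ⟨fun x hx => mem_biUnion hx (hW x).2.1,
      mem_iInter₂.2 fun x hx => ⟨x, hx, (hW x).2.1⟩⟩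

/-- For a topological packing graph `G`, the cardinality map
`I_t → ℕ`, `S ↦ |S|`, is continuous; in particular each set `I_{=s}` of independent sets of
cardinality exactly `s` is both open and closed in `I_t`. -/
theorem cardinality_map_continuous
    {V : Type u} [TopologicalSpace V] [T2Space V]
    (G : SimpleGraph V) (hG : IsPackingGraph G) (t : ℕ) :
    Continuous (fun S : IndepSpace G t => S.1.1.ncard) ∧
      ∀ s : ℕ, IsOpen {S : IndepSpace G t | S.1.1.ncard = s} ∧
        IsClosed {S : IndepSpace G t | S.1.1.ncard = s} := by
  have hcont : Continuous (fun S : IndepSpace G t => S.1.1.ncard) :=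
    continuous_discrete_rng.2 fun s => hG.isOpen_setOf_ncard_eq t s
  exact ⟨hcont, fun s => ⟨hG.isOpen_setOf_ncard_eq t s, isClosed_singleton.preimage hcont⟩⟩

end
end

section
/- Let G = (V, E) be a compact topological packing graph. Then the optimization problem θ'(G)* has a feasible solution: there exist a ∈ ℝ and a continuous positive definite kernel F ∈ C(V × V)_{⪰0} such that F(x, x) ≤ a − 1 for all x ∈ V and F(x, y) ≤ −1 whenever {x, y} is an independent set of cardinality two. -/
open MeasureTheory Set Topology
open scoped NNReal ENNReal

noncomputable section

universe u

variable {V : Type u}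

/-!
Every vertex lies in an open clique, so by compactness `V` is covered by finitely
many open cliques `U₁, …, Uₙ`. Take a partition of unity `f₁, …, fₙ` subordinate to this cover
and put `F(x, y) = n ∑ᵢ fᵢ(x) fᵢ(y) - 1`. Its quadratic form is
`n ∑ᵢ (∑ⱼ cⱼ fᵢ(xⱼ))² - (∑ⱼ cⱼ)²`, which is nonnegative by Cauchy–Schwarz because
`∑ⱼ cⱼ = ∑ᵢ ∑ⱼ cⱼ fᵢ(xⱼ)`. On the diagonal `F(x, x) ≤ n - 1` since `∑ᵢ fᵢ(x)² ≤ 1`, and for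
non-adjacent `x ≠ y` no `fᵢ` is nonzero at both points, so `F(x, y) = -1`.
-/

section PartitionKernel

variable {X : Type*} [TopologicalSpace X] {ι : Type*} [Fintype ι]

def partitionKernel (g : ι → C(X, ℝ)) : C(X × X, ℝ) :=
  ⟨fun p => Fintype.card ι * ∑ i, g i p.1 * g i p.2 - 1, by fun_prop⟩

@[simp]
lemma partitionKernel_apply (g : ι → C(X, ℝ)) (x y : X) :
    partitionKernel g (x, y) = Fintype.card ι * ∑ i, g i x * g i y - 1 :=
  rfl

lemma partitionKernel_symm (g : ι → C(X, ℝ)) (x y : X) :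
    partitionKernel g (x, y) = partitionKernel g (y, x) := by
  simp only [partitionKernel_apply, mul_comm (g _ x)]

lemma sum_sum_mul_partitionKernel {m : ℕ} (g : ι → C(X, ℝ)) (x : Fin m → X) (c : Fin m → ℝ) :
    ∑ j, ∑ k, c j * c k * partitionKernel g (x j, x k) =
      Fintype.card ι * ∑ i, (∑ j, c j * g i (x j)) ^ 2 - (∑ j, c j) ^ 2 := by
  have hgram : ∑ j, ∑ k, c j * c k * ∑ i, g i (x j) * g i (x k) =
      ∑ i, (∑ j, c j * g i (x j)) ^ 2 := by
    simp_rw [sq, Finset.sum_mul_sum, Finset.mul_sum,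
      Finset.sum_comm_cycle (s := Finset.univ (α := Fin m))]
    refine Finset.sum_congr rfl fun i _ => Finset.sum_congr rfl fun j _ =>
      Finset.sum_congr rfl fun k _ => ?_
    ring
  simp only [partitionKernel_apply]
  rw [← hgram, sq, Finset.sum_mul_sum, Finset.mul_sum, ← Finset.sum_sub_distrib]
  refine Finset.sum_congr rfl fun j _ => ?_
  rw [Finset.mul_sum, ← Finset.sum_sub_distrib]
  refine Finset.sum_congr rfl fun k _ => ?_
  ring

lemma isPosDefKernel_partitionKernel (g : ι → C(X, ℝ)) (hsum : ∀ x, ∑ i, g i x = 1) :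
    IsPosDefKernel (partitionKernel g) := by
  refine ⟨partitionKernel_symm g, fun m x c => ?_⟩
  have hc : ∑ j, c j = ∑ i, ∑ j, c j * g i (x j) := by
    rw [Finset.sum_comm]
    simp only [← Finset.mul_sum, hsum, mul_one]
  rw [sum_sum_mul_partitionKernel, sub_nonneg, hc]
  exact sq_sum_le_card_mul_sum_sq

lemma partitionKernel_diag_le (g : ι → C(X, ℝ)) (hsum : ∀ x, ∑ i, g i x = 1)
    (hnonneg : ∀ i x, 0 ≤ g i x) (x : X) :
    partitionKernel g (x, x) ≤ Fintype.card ι - 1 := by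
  have hsq : ∑ i, g i x * g i x ≤ 1 := by
    simpa only [sq, hsum, mul_one] using
      Finset.sum_sq_le_sq_sum_of_nonneg (s := Finset.univ) fun i _ => hnonneg i x
  rw [partitionKernel_apply, sub_le_sub_iff_right]
  exact mul_le_of_le_one_right (Nat.cast_nonneg _) hsq

lemma partitionKernel_eq_neg_one (g : ι → C(X, ℝ)) {x y : X}
    (hxy : ∀ i, g i x * g i y = 0) : partitionKernel g (x, y) = -1 := by
  simp [hxy]

end PartitionKernel

namespace IsPackingGraph

variable [TopologicalSpace V] {G : SimpleGraph V}

lemma exists_isOpen_isClique_mem_s13 (hG : IsPackingGraph G) (x : V) :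
    ∃ U : Set V, IsOpen U ∧ x ∈ U ∧ G.IsClique U := by
  obtain ⟨U, hUo, hxU, hU⟩ := hG {x} (finite_singleton x) (G.isClique_singleton x)
  exact ⟨U, hUo, hxU rfl, hU⟩

lemma exists_partitionOfUnity_isClique_support [CompactSpace V] [T2Space V]
    (hG : IsPackingGraph G) :
    ∃ (s : Finset V) (f : PartitionOfUnity s V univ),
      ∀ i, G.IsClique (Function.support (f i)) := by
  choose U hUo hxU hU using hG.exists_isOpen_isClique_mem_s13
  obtain ⟨s, hs⟩ := CompactSpace.elim_nhds_subcover U fun x => (hUo x).mem_nhds (hxU x)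
  have hcover : univ ⊆ ⋃ i : s, U i := by
    rw [Set.iUnion_subtype]
    exact hs.ge
  obtain ⟨f, hf⟩ := PartitionOfUnity.exists_isSubordinate isClosed_univ (fun i : s => U i)
    (fun i => hUo i) hcover
  exact ⟨s, f, fun i => (hU i).subset (subset_closure.trans (hf i))⟩

end IsPackingGraph

lemma SimpleGraph.IsClique.mul_eq_zero_of_not_adj {G : SimpleGraph V} {g : V → ℝ}
    (hg : G.IsClique (Function.support g)) {x y : V} (hxy : x ≠ y) (hadj : ¬ G.Adj x y) :
    g x * g y = 0 := by
  by_contra h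
  exact hadj (hg (left_ne_zero_of_mul h) (right_ne_zero_of_mul h) hxy)

/-- For a compact topological packing graph `G`, the optimization problem
`θ'(G)^*` has a feasible solution: there are `a ∈ ℝ` and a continuous positive definite
kernel `F` on `V × V` with `F(x,x) ≤ a − 1` for all `x` and `F(x,y) ≤ −1` for all
independent pairs `{x,y} ∈ I_{=2}`. -/
theorem thetaPrimeDual_has_feasible_solution
    {V : Type u} [TopologicalSpace V] [CompactSpace V] [T2Space V]
    (G : SimpleGraph V) (hG : IsPackingGraph G) :
    ∃ (a : ℝ) (F : C(V × V, ℝ)), IsPosDefKernel F ∧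
      (∀ x : V, F (x, x) ≤ a - 1) ∧
      ∀ x y : V, x ≠ y → ¬ G.Adj x y → F (x, y) ≤ -1 := by
  obtain ⟨s, f, hf⟩ := hG.exists_partitionOfUnity_isClique_support
  have hsum : ∀ x, ∑ i, f i x = 1 := fun x => by
    rw [← finsum_eq_sum_of_fintype]
    exact f.sum_eq_one (mem_univ x)
  refine ⟨Fintype.card s, partitionKernel (fun i => f i), isPosDefKernel_partitionKernel _ hsum,
    partitionKernel_diag_le _ hsum f.nonneg, fun x y hxy hadj => ?_⟩
  exact (partitionKernel_eq_neg_one _ fun i => (hf i).mul_eq_zero_of_not_adj hxy hadj).le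

end
end

section
/- Let G = (V, E) be a compact topological packing graph. Then the first step of the dual generalized Lasserre hierarchy equals the generalized θ'-number: las_1(G)* = θ'(G)*. -/
open MeasureTheory Set Topology
open scoped NNReal ENNReal

noncomputable section

universe u

variable {V : Type u}

/-- The value of the generalized `θ'`-number in its dual ("infimum") formulation:
`θ'(G)^* = inf { a : F ∈ C(V × V)_{⪰0}, F(x,x) ≤ a − 1, F(x,y) ≤ −1 on I_{=2} }`. -/
def thetaDualValue [TopologicalSpace V] (G : SimpleGraph V) : ℝ :=
  sInf {a : ℝ | ∃ F : C(V × V, ℝ), IsPosDefKernel F ∧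
    (∀ x : V, F (x, x) ≤ a - 1) ∧
    ∀ x y : V, x ≠ y → ¬ G.Adj x y → F (x, y) ≤ -1}

/-!
Since `I_1 = {∅} ⊔ {{x} : x ∈ V} ≅ V ⊕ Unit`, a kernel on `I_1` is a block kernel
`[[c, g], [g, M]]`, and the constraints of `las_1(G)^*` read `2 g(x) + M(x, x) ≤ -1` and
`M(x, y) ≤ 0` for distinct non-adjacent `x, y`. These force `g < 0` and `c > 0`, and then the
rescaled Schur complement `F = (c M - g ⊗ g) / (g ⊗ g)` is feasible for `θ'(G)^*` with value `c`.
Conversely, a `θ'`-feasible `(F, a)` gives the feasible block kernel `[[a, -1], [-1, (1 + F) / a]]`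
of value `a`. So for nonempty `V` the two programs have the same feasible values; for empty `V`
both infima are `0` (the second one by the junk value of `sInf` on an unbounded set).
-/

section PSD

variable {X Y : Type*}

def IsPosSemidefFun (k : X × X → ℝ) : Prop :=
  ∀ (m : ℕ) (x : Fin m → X) (c : Fin m → ℝ), 0 ≤ ∑ i, ∑ j, c i * c j * k (x i, x j)

namespace IsPosSemidefFun

variable {k l : X × X → ℝ}

lemma diag_nonneg (hk : IsPosSemidefFun k) (x : X) : 0 ≤ k (x, x) := by
  simpa using hk 1 (fun _ => x) (fun _ => 1)

lemma pair_sum_nonneg (hk : IsPosSemidefFun k) (x y : X) :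
    0 ≤ k (x, x) + k (x, y) + k (y, x) + k (y, y) := by
  have h := hk 2 ![x, y] ![1, 1]
  simp only [Fin.sum_univ_two, Matrix.cons_val_zero, Matrix.cons_val_one, one_mul] at h
  linarith

lemma comp (hk : IsPosSemidefFun k) (f : Y → X) :
    IsPosSemidefFun fun p : Y × Y => k (f p.1, f p.2) :=
  fun m x c => hk m (f ∘ x) c

lemma add (hk : IsPosSemidefFun k) (hl : IsPosSemidefFun l) : IsPosSemidefFun (k + l) :=
  fun m x c => by
    simpa only [Pi.add_apply, mul_add, Finset.sum_add_distrib] using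
      add_nonneg (hk m x c) (hl m x c)

lemma div_const (hk : IsPosSemidefFun k) {a : ℝ} (ha : 0 ≤ a) :
    IsPosSemidefFun fun p => k p / a :=
  fun m x c => by
    simpa only [mul_div_assoc', Finset.sum_div] using div_nonneg (hk m x c) ha

lemma mul_rankOne (hk : IsPosSemidefFun k) (w : X → ℝ) :
    IsPosSemidefFun fun p => w p.1 * w p.2 * k p :=
  fun m x c => by
    convert hk m x (fun i => c i * w (x i)) using 3
    ring

end IsPosSemidefFun

lemma isPosSemidefFun_rankOne (w : X → ℝ) : IsPosSemidefFun fun p : X × X => w p.1 * w p.2 :=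
  fun m x c => by
    have : ∑ i, ∑ j, c i * c j * (w (x i) * w (x j)) = (∑ i, c i * w (x i)) ^ 2 := by
      rw [sq, Finset.sum_mul_sum]
      exact Finset.sum_congr rfl fun i _ => Finset.sum_congr rfl fun j _ => by ring
    exact this ▸ sq_nonneg _

lemma IsPosSemidefFun.schurComplement {k : X × X → ℝ} (hk : IsPosSemidefFun k)
    (hsymm : ∀ x y, k (x, y) = k (y, x)) {z : X} (hz : 0 < k (z, z)) :
    IsPosSemidefFun fun p => k (z, z) * k p - k (z, p.1) * k (z, p.2) := fun m x c => by
  set s := ∑ i, c i * k (z, x i)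
  set q := ∑ i, ∑ j, c i * c j * k (x i, x j)
  -- the form of `k` at the vector `(-s, k(z,z) • c)` on `z :: x` is `k(z,z) (k(z,z) q - s²)`
  have h := hk (m + 1) (Fin.cons z x) (Fin.cons (-s) fun i => k (z, z) * c i)
  simp only [Fin.sum_univ_succ, Fin.cons_zero, Fin.cons_succ] at h
  have hcross : ∑ i, -s * (k (z, z) * c i) * k (z, x i) = -(k (z, z) * s ^ 2) := by
    calc _ = -(k (z, z) * s) * s := by
          rw [Finset.mul_sum]; exact Finset.sum_congr rfl fun i _ => by ring
      _ = _ := by ring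
  have hrest : ∑ i, (k (z, z) * c i * -s * k (x i, z) +
      ∑ j, k (z, z) * c i * (k (z, z) * c j) * k (x i, x j)) =
      -(k (z, z) * s ^ 2) + k (z, z) ^ 2 * q := by
    rw [Finset.sum_add_distrib, ← hcross]
    simp only [q, hsymm _ z, Finset.mul_sum]
    congr 1 <;> refine Finset.sum_congr rfl fun i _ => ?_
    · ring
    · exact Finset.sum_congr rfl fun j _ => by ring
  rw [hcross, hrest] at h
  have hschur : ∑ i, ∑ j, c i * c j * (k (z, z) * k (x i, x j) - k (z, x i) * k (z, x j)) =
      k (z, z) * q - s ^ 2 := by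
    rw [sq, Finset.sum_mul_sum, Finset.mul_sum, ← Finset.sum_sub_distrib]
    refine Finset.sum_congr rfl fun i _ => ?_
    rw [Finset.mul_sum, ← Finset.sum_sub_distrib]
    exact Finset.sum_congr rfl fun j _ => by ring
  have key : 0 ≤ k (z, z) * (k (z, z) * q - s ^ 2) := by linarith
  exact hschur ▸ (mul_nonneg_iff_of_pos_left hz).mp key

end PSD

lemma Set.pair_eq_singleton_iff {α : Type*} {u v x : α} :
    ({u, v} : Set α) = {x} ↔ u = x ∧ v = x := by
  refine ⟨fun h => ?_, fun ⟨hu, hv⟩ => by rw [hu, hv, Set.pair_eq_singleton]⟩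
  simp only [Set.eq_singleton_iff_unique_mem, Set.mem_insert_iff, Set.mem_singleton_iff,
    forall_eq_or_imp, forall_eq] at h
  exact h.2

lemma Set.singleton_ne_pair {α : Type*} {u x y : α} (hxy : x ≠ y) : ({u} : Set α) ≠ {x, y} :=
  fun h => hxy ((Set.pair_eq_singleton_iff.mp h.symm).1.trans
    (Set.pair_eq_singleton_iff.mp h.symm).2.symm)

lemma indepVerts_of_subsingleton (G : SimpleGraph V) {S : Set V} (hS : S.Subsingleton) :
    IndepVerts G S :=
  fun _ hx _ hy hadj => G.loopless.irrefl _ (hS hx hy ▸ hadj)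

section Indep

variable [TopologicalSpace V] (G : SimpleGraph V)

namespace IndepSpace

def singleton₁ (x : V) : IndepSpace G 1 :=
  ⟨⟨{x}, Set.finite_singleton x, by simp⟩, indepVerts_of_subsingleton G Set.subsingleton_singleton⟩

def singleton₂ (x : V) : IndepSpace G (2 * 1) :=
  ⟨⟨{x}, Set.finite_singleton x, by simp⟩, indepVerts_of_subsingleton G Set.subsingleton_singleton⟩

def pair₂ {x y : V} (h : ¬ G.Adj x y) : IndepSpace G (2 * 1) :=
  ⟨⟨{x, y}, Set.toFinite _, (Set.ncard_insert_le x {y}).trans (by simp)⟩, by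
    rintro u (rfl | rfl) v (rfl | rfl) huv
    exacts [G.loopless.irrefl _ huv, h huv, h huv.symm, G.loopless.irrefl _ huv]⟩

variable {G}

lemma ext_val {t : ℕ} {S T : IndepSpace G t} (h : S.1.1 = T.1.1) : S = T :=
  Subtype.ext (Subtype.ext h)

@[simp] lemma val_emptyIndep (t : ℕ) : (emptyIndep G t).1.1 = ∅ := rfl
@[simp] lemma val_singleton₁ (x : V) : (singleton₁ G x).1.1 = {x} := rfl
@[simp] lemma val_singleton₂ (x : V) : (singleton₂ G x).1.1 = {x} := rfl
@[simp] lemma val_pair₂ {x y : V} (h : ¬ G.Adj x y) : (pair₂ G h).1.1 = {x, y} := rfl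

@[simp] lemma singleton₁_inj {x y : V} : singleton₁ G x = singleton₁ G y ↔ x = y :=
  ⟨fun h => Set.singleton_injective (congrArg (·.1.1) h), fun h => h ▸ rfl⟩

@[simp] lemma singleton₁_ne_empty (x : V) : singleton₁ G x ≠ emptyIndep G 1 :=
  fun h => Set.singleton_ne_empty x (congrArg (·.1.1) h)

@[simp] lemma empty_ne_singleton₁ (x : V) : emptyIndep G 1 ≠ singleton₁ G x :=
  (singleton₁_ne_empty x).symm

lemma eq_empty_or_singleton₁ (S : IndepSpace G 1) :
    S = emptyIndep G 1 ∨ ∃ x, S = singleton₁ G x := by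
  rcases (Set.ncard_le_one_iff_eq S.1.2.1).mp S.1.2.2 with h | ⟨x, h⟩
  exacts [Or.inl (ext_val h), Or.inr ⟨x, ext_val h⟩]

lemma eq_empty_or_singleton₂_or_pair₂ (S : IndepSpace G (2 * 1)) :
    S = emptyIndep G _ ∨ (∃ x, S = singleton₂ G x) ∨
      ∃ (x y : V) (_ : x ≠ y) (h : ¬ G.Adj x y), S = pair₂ G h := by
  obtain h | h | h : S.1.1.ncard = 0 ∨ S.1.1.ncard = 1 ∨ S.1.1.ncard = 2 := by
    have := S.1.2.2; omega
  · exact Or.inl (ext_val ((Set.ncard_eq_zero S.1.2.1).mp h))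
  · obtain ⟨x, hx⟩ := Set.ncard_eq_one.mp h
    exact Or.inr (Or.inl ⟨x, ext_val hx⟩)
  · obtain ⟨x, y, hxy, hS⟩ := Set.ncard_eq_two.mp h
    have hadj : ¬ G.Adj x y := S.2 (by simp [hS]) (by simp [hS])
    exact Or.inr (Or.inr ⟨x, y, hxy, hadj, ext_val hS⟩)

end IndepSpace

open IndepSpace

variable {G}

lemma atFun_eq_sum {t : ℕ} (K : IndepSpace G t × IndepSpace G t → ℝ) (S : IndepSpace G (2 * t))
    (s : Finset (IndepSpace G t × IndepSpace G t))
    (hs : ∀ p : IndepSpace G t × IndepSpace G t, p.1.1.1 ∪ p.2.1.1 = S.1.1 ↔ p ∈ s) :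
    AtFun G t K S = ∑ p ∈ s, K p := by
  rw [AtFun, ← finsum_mem_coe_finset]
  exact finsum_congr fun p => finsum_congr_Prop (propext (hs p)) fun _ => rfl

lemma atFun_singleton₂ (K : IndepSpace G 1 × IndepSpace G 1 → ℝ) (x : V) :
    AtFun G 1 K (singleton₂ G x) = K (emptyIndep G 1, singleton₁ G x) +
      K (singleton₁ G x, emptyIndep G 1) + K (singleton₁ G x, singleton₁ G x) := by
  classical
  rw [atFun_eq_sum K _ {(emptyIndep G 1, singleton₁ G x), (singleton₁ G x, emptyIndep G 1),
    (singleton₁ G x, singleton₁ G x)}, Finset.sum_insert (by simp), Finset.sum_pair (by simp),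
    add_assoc]
  rintro ⟨J, J'⟩
  rcases eq_empty_or_singleton₁ J with rfl | ⟨u, rfl⟩ <;>
    rcases eq_empty_or_singleton₁ J' with rfl | ⟨v, rfl⟩ <;>
    simp [Set.pair_eq_singleton_iff, and_comm]

lemma atFun_pair₂ (K : IndepSpace G 1 × IndepSpace G 1 → ℝ) {x y : V} (hxy : x ≠ y)
    (h : ¬ G.Adj x y) :
    AtFun G 1 K (pair₂ G h) =
      K (singleton₁ G x, singleton₁ G y) + K (singleton₁ G y, singleton₁ G x) := by
  classical
  rw [atFun_eq_sum K _ {(singleton₁ G x, singleton₁ G y), (singleton₁ G y, singleton₁ G x)},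
    Finset.sum_pair (by simp [hxy])]
  rintro ⟨J, J'⟩
  rcases eq_empty_or_singleton₁ J with rfl | ⟨u, rfl⟩ <;>
    rcases eq_empty_or_singleton₁ J' with rfl | ⟨v, rfl⟩ <;>
    simp [Set.pair_eq_pair_iff, (Set.insert_nonempty x {y}).ne_empty.symm,
      Set.singleton_ne_pair hxy, and_comm, or_comm]

end Indep

section Topology

lemma qMap_one_bijective : Function.Bijective (qMap V 1) := by
  refine ⟨?_, fun S => ?_⟩
  · rintro (f | ⟨⟩) (g | ⟨⟩) h <;> have h' := congrArg Subtype.val h <;>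
      simp only [qMap, Set.range_unique, Set.singleton_eq_singleton_iff] at h'
    · exact congrArg Sum.inl (funext fun i => Subsingleton.elim i default ▸ h')
    · exact absurd h' (Set.singleton_ne_empty _)
    · exact absurd h'.symm (Set.singleton_ne_empty _)
    · rfl
  · rcases (Set.ncard_le_one_iff_eq S.2.1).mp S.2.2 with h | ⟨x, h⟩
    · exact ⟨Sum.inr (), Subtype.ext h.symm⟩
    · exact ⟨Sum.inl fun _ => x, Subtype.ext (by simp [qMap, h])⟩

variable [TopologicalSpace V] (G : SimpleGraph V)

open IndepSpace

lemma isHomeomorph_qMap_one : IsHomeomorph (qMap V 1) :=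
  isHomeomorph_iff_isQuotientMap_injective.mpr
    ⟨⟨⟨rfl⟩, qMap_one_bijective.surjective⟩, qMap_one_bijective.injective⟩

def indepSpaceOneHomeo : IndepSpace G 1 ≃ₜ SubAtMost V 1 where
  toFun S := S.1
  invFun S := ⟨S, indepVerts_of_subsingleton G ((Set.ncard_le_one S.2.1.to_subtype).mp S.2.2)⟩
  left_inv _ := rfl
  right_inv _ := rfl
  continuous_toFun := continuous_subtype_val
  continuous_invFun := continuous_id.subtype_mk _

def sumUnitHomeoIndepOne : (V ⊕ Unit) ≃ₜ IndepSpace G 1 :=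
  ((Homeomorph.funUnique (Fin 1) V).symm.sumCongr (Homeomorph.refl Unit)).trans
    ((isHomeomorph_qMap_one.homeomorph _).trans (indepSpaceOneHomeo G).symm)

@[simp] lemma sumUnitHomeoIndepOne_inl (x : V) :
    sumUnitHomeoIndepOne G (Sum.inl x) = singleton₁ G x :=
  ext_val (Set.range_const : Set.range (fun _ : Fin 1 => x) = {x})

@[simp] lemma sumUnitHomeoIndepOne_inr (u : Unit) :
    sumUnitHomeoIndepOne G (Sum.inr u) = emptyIndep G 1 :=
  ext_val rfl

@[simp] lemma sumUnitHomeoIndepOne_symm_singleton₁ (x : V) :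
    (sumUnitHomeoIndepOne G).symm (singleton₁ G x) = Sum.inl x := by
  rw [← sumUnitHomeoIndepOne_inl, Homeomorph.symm_apply_apply]

@[simp] lemma sumUnitHomeoIndepOne_symm_emptyIndep :
    (sumUnitHomeoIndepOne G).symm (emptyIndep G 1) = Sum.inr () := by
  rw [← sumUnitHomeoIndepOne_inr G (), Homeomorph.symm_apply_apply]

@[fun_prop]
lemma continuous_singleton₁ : Continuous (singleton₁ G) := by
  simpa [Function.comp_def] using (sumUnitHomeoIndepOne G).continuous.comp continuous_inl

end Topology

lemma IsPosDefKernel.isPosSemidefFun {X : Type*} [TopologicalSpace X] {K : C(X × X, ℝ)}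
    (hK : IsPosDefKernel K) : IsPosSemidefFun K :=
  hK.2

lemma IsPosDefKernel.comp_prodMap {X Y : Type*} [TopologicalSpace X] [TopologicalSpace Y]
    {K : C(X × X, ℝ)} (hK : IsPosDefKernel K) (f : C(Y, X)) :
    IsPosDefKernel (K.comp (f.prodMap f)) :=
  ⟨fun _ _ => hK.1 _ _, hK.isPosSemidefFun.comp f⟩

section Feasibility

variable [TopologicalSpace V] {G : SimpleGraph V}

open IndepSpace

lemma lasDualFeasible_one_iff (K : C(IndepSpace G 1 × IndepSpace G 1, ℝ)) :
    lasDualFeasible G 1 K ↔ IsPosDefKernel K ∧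
      (∀ x, 2 * K (emptyIndep G 1, singleton₁ G x) + K (singleton₁ G x, singleton₁ G x) ≤ -1) ∧
      ∀ x y, x ≠ y → ¬ G.Adj x y → K (singleton₁ G x, singleton₁ G y) ≤ 0 := by
  refine ⟨fun ⟨hK, hcons⟩ => ⟨hK, fun x => ?_, fun x y hxy h => ?_⟩,
    fun ⟨hK, hsing, hpair⟩ => ⟨hK, fun S hS => ?_⟩⟩
  · have := hcons (singleton₂ G x) fun h => by simpa using congrArg (·.1.1) h
    rw [atFun_singleton₂, if_pos (by simp)] at this
    linarith [hK.1 (singleton₁ G x) (emptyIndep G 1)]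
  · have := hcons (pair₂ G h) fun h' => (Set.insert_nonempty x {y}).ne_empty (congrArg (·.1.1) h')
    rw [atFun_pair₂ _ hxy, if_neg (by simp [Set.ncard_pair hxy])] at this
    linarith [hK.1 (singleton₁ G x) (singleton₁ G y)]
  · rcases eq_empty_or_singleton₂_or_pair₂ S with rfl | ⟨x, rfl⟩ | ⟨x, y, hxy, h, rfl⟩
    · exact absurd rfl hS
    · rw [atFun_singleton₂, if_pos (by simp)]
      linarith [hsing x, hK.1 (singleton₁ G x) (emptyIndep G 1)]
    · rw [atFun_pair₂ _ hxy, if_neg (by simp [Set.ncard_pair hxy])]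
      linarith [hpair x y hxy h, hpair y x hxy.symm fun h' => h h'.symm]

variable (G) in
lemma exists_theta_of_lasDualFeasible [Nonempty V] {K : C(IndepSpace G 1 × IndepSpace G 1, ℝ)}
    (hK : lasDualFeasible G 1 K) :
    ∃ F : C(V × V, ℝ), IsPosDefKernel F ∧
      (∀ x, F (x, x) ≤ K (emptyIndep G 1, emptyIndep G 1) - 1) ∧
      ∀ x y, x ≠ y → ¬ G.Adj x y → F (x, y) ≤ -1 := by
  obtain ⟨hK, hsing, hpair⟩ := (lasDualFeasible_one_iff K).mp hK
  set c := K (emptyIndep G 1, emptyIndep G 1)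
  set g := fun x => K (emptyIndep G 1, singleton₁ G x)
  have hg (x : V) : g x < 0 := by
    linarith [hsing x, hK.isPosSemidefFun.diag_nonneg (singleton₁ G x)]
  have hc : 0 < c := by
    obtain ⟨x⟩ := ‹Nonempty V›
    linarith [hsing x, hK.isPosSemidefFun.pair_sum_nonneg (emptyIndep G 1) (singleton₁ G x),
      hK.1 (singleton₁ G x) (emptyIndep G 1)]
  refine ⟨⟨fun p => (g p.1)⁻¹ * (g p.2)⁻¹ *
      (c * K (singleton₁ G p.1, singleton₁ G p.2) - g p.1 * g p.2),
      by fun_prop (disch := exact fun _ => (hg _).ne)⟩,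
    ⟨fun x y => ?_, ((hK.isPosSemidefFun.schurComplement hK.1 hc).comp (singleton₁ G)).mul_rankOne
      fun x => (g x)⁻¹⟩,
    fun x => ?_, fun x y hxy h => ?_⟩
  · simp only [ContinuousMap.coe_mk]
    rw [hK.1 (singleton₁ G x)]
    ring
  · have hM : K (singleton₁ G x, singleton₁ G x) ≤ g x ^ 2 := by
      nlinarith [hsing x, sq_nonneg (g x + 1)]
    have hgx := (hg x).ne
    calc (g x)⁻¹ * (g x)⁻¹ * (c * K (singleton₁ G x, singleton₁ G x) - g x * g x)
        = c * (K (singleton₁ G x, singleton₁ G x) / g x ^ 2) - 1 := by field_simp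
      _ ≤ c * 1 - 1 := by gcongr; exact div_le_one_of_le₀ hM (sq_nonneg _)
      _ = c - 1 := by ring
  · have hgxy : 0 < g x * g y := mul_pos_of_neg_of_neg (hg x) (hg y)
    calc (g x)⁻¹ * (g y)⁻¹ * (c * K (singleton₁ G x, singleton₁ G y) - g x * g y)
        = c * K (singleton₁ G x, singleton₁ G y) / (g x * g y) - 1 := by
          rw [← mul_inv, inv_mul_eq_div, sub_div, div_self hgxy.ne']
      _ ≤ 0 - 1 := by
        gcongr
        exact div_nonpos_of_nonpos_of_nonneg
          (mul_nonpos_of_nonneg_of_nonpos hc.le (hpair x y hxy h)) hgxy.le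
      _ = -1 := by ring

end Feasibility

section KernelOfTheta

variable [TopologicalSpace V]

/-- The block kernel `[[a, -1], [-1, (1 + F) / a]]` on `V ⊕ {∅} ≅ I_1`, written as
`(w ⊗ w + F ⊕ 0) / a` with `w = (-1, a)`. The base point `x₀` is a dummy that makes the
`F`-term, which vanishes off `V × V`, continuous. -/
def kernelOfTheta (F : C(V × V, ℝ)) (a : ℝ) (x₀ : V) : C((V ⊕ Unit) × (V ⊕ Unit), ℝ) :=
  let w : V ⊕ Unit → ℝ := Sum.elim (fun _ => -1) fun _ => a
  let χ : V ⊕ Unit → ℝ := Sum.elim (fun _ => 1) fun _ => 0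
  let P : V ⊕ Unit → V := Sum.elim id fun _ => x₀
  have hw : Continuous w := continuous_const.sumElim continuous_const
  have hχ : Continuous χ := continuous_const.sumElim continuous_const
  have hP : Continuous P := continuous_id.sumElim continuous_const
  ⟨fun p => (w p.1 * w p.2 + χ p.1 * χ p.2 * F (P p.1, P p.2)) / a, by fun_prop⟩

variable (F : C(V × V, ℝ)) (a : ℝ) (x₀ : V)

@[simp] lemma kernelOfTheta_inl_inl (x y : V) :
    kernelOfTheta F a x₀ (Sum.inl x, Sum.inl y) = (1 + F (x, y)) / a := by
  simp [kernelOfTheta]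

variable {a}

@[simp] lemma kernelOfTheta_inr_inl (ha : a ≠ 0) (u : Unit) (y : V) :
    kernelOfTheta F a x₀ (Sum.inr u, Sum.inl y) = -1 := by
  simp [kernelOfTheta, ha]

@[simp] lemma kernelOfTheta_inr_inr (ha : a ≠ 0) (u v : Unit) :
    kernelOfTheta F a x₀ (Sum.inr u, Sum.inr v) = a := by
  simp [kernelOfTheta, ha]

lemma isPosDefKernel_kernelOfTheta {F : C(V × V, ℝ)} (hF : IsPosDefKernel F) (ha : 0 < a) :
    IsPosDefKernel (kernelOfTheta F a x₀) := by
  refine ⟨fun s t => ?_, ((isPosSemidefFun_rankOne _).add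
    ((hF.isPosSemidefFun.comp (Sum.elim id fun _ => x₀)).mul_rankOne _)).div_const ha.le⟩
  simp only [kernelOfTheta, ContinuousMap.coe_mk]
  rw [hF.1]
  ring

end KernelOfTheta

section Main

variable [TopologicalSpace V] (G : SimpleGraph V)

open IndepSpace

lemma exists_lasDualFeasible_of_theta [Nonempty V] {F : C(V × V, ℝ)} {a : ℝ}
    (hF : IsPosDefKernel F) (hdiag : ∀ x, F (x, x) ≤ a - 1)
    (hoff : ∀ x y, x ≠ y → ¬ G.Adj x y → F (x, y) ≤ -1) :
    ∃ K : C(IndepSpace G 1 × IndepSpace G 1, ℝ), lasDualFeasible G 1 K ∧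
      K (emptyIndep G 1, emptyIndep G 1) = a := by
  obtain ⟨x₀⟩ := ‹Nonempty V›
  have ha : 0 < a := by linarith [hF.isPosSemidefFun.diag_nonneg x₀, hdiag x₀]
  let e : C(IndepSpace G 1, V ⊕ Unit) := (sumUnitHomeoIndepOne G).symm
  let K := (kernelOfTheta F a x₀).comp (e.prodMap e)
  have hK_empty : K (emptyIndep G 1, emptyIndep G 1) = a := by simp [K, e, ha.ne']
  have hK_edge (x : V) : K (emptyIndep G 1, singleton₁ G x) = -1 := by simp [K, e, ha.ne']
  have hK_single (x y : V) : K (singleton₁ G x, singleton₁ G y) = (1 + F (x, y)) / a := by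
    simp [K, e]
  refine ⟨K, (lasDualFeasible_one_iff K).mpr
    ⟨(isPosDefKernel_kernelOfTheta x₀ hF ha).comp_prodMap e, fun x => ?_, fun x y hxy h => ?_⟩,
    hK_empty⟩
  · rw [hK_edge, hK_single]
    linarith [(div_le_one ha).mpr (by linarith [hdiag x] : 1 + F (x, x) ≤ a)]
  · rw [hK_single]
    exact div_nonpos_of_nonpos_of_nonneg (by linarith [hoff x y hxy h]) ha.le

lemma lasDualValue_one_of_isEmpty [IsEmpty V] : lasDualValue G 1 = 0 := by
  refine IsLeast.csInf_eq ⟨⟨0, ⟨⟨fun _ _ => rfl, fun _ _ _ => by simp⟩, fun S hS => ?_⟩, rfl⟩, ?_⟩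
  · exact absurd (ext_val (Set.eq_empty_of_isEmpty _)) hS
  · rintro _ ⟨K, hK, rfl⟩
    exact hK.1.isPosSemidefFun.diag_nonneg _

lemma thetaDualValue_of_isEmpty [IsEmpty V] : thetaDualValue G = 0 := by
  refine Real.sInf_of_not_bddBelow fun ⟨b, hb⟩ => ?_
  have := hb ⟨0, ⟨fun _ _ => rfl, fun _ _ _ => by simp⟩, isEmptyElim, isEmptyElim⟩ (a := b - 1)
  linarith

end Main

theorem lasDual_one_eq_thetaPrime_general
    {V : Type u} [TopologicalSpace V]
    (G : SimpleGraph V) :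
    lasDualValue G 1 = thetaDualValue G := by
  rcases isEmpty_or_nonempty V with hV | hV
  · rw [lasDualValue_one_of_isEmpty, thetaDualValue_of_isEmpty]
  · rw [lasDualValue, thetaDualValue]
    congr 1
    ext a
    constructor
    · rintro ⟨K, hK, rfl⟩
      exact exists_theta_of_lasDualFeasible G hK
    · rintro ⟨F, hF, hdiag, hoff⟩
      obtain ⟨K, hK, rfl⟩ := exists_lasDualFeasible_of_theta G hF hdiag hoff
      exact ⟨K, hK, rfl⟩

/-- For a compact topological packing graph `G`, the first step of the dual
generalized Lasserre hierarchy equals the generalized `θ'`-number: `las_1(G)^* = θ'(G)^*`. -/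
theorem lasDual_one_eq_thetaPrime
    {V : Type u} [TopologicalSpace V] [CompactSpace V] [T2Space V]
    (G : SimpleGraph V) (hG : IsPackingGraph G) :
    lasDualValue G 1 = thetaDualValue G :=
  lasDual_one_eq_thetaPrime_general G

end
end

section
/- Generalized Schur complement for measures: Let X be a compact Hausdorff space and let x_1,…,x_n ∈ X be points whose singletons {x_i} are open. Suppose μ ∈ M(X × X)_sym is a symmetric signed Radon measure such that the matrix A = (μ({(x_i, x_j)}))_{i,j=1}^n is positive definite. Let F ⊆ C(X) be the set of continuous functions vanishing on {x_1,…,x_n}, and for g ∈ F define v_g ∈ ℝ^n by (v_g)_i = μ(1_{{x_i}} ⊗ g). Then μ is positive definite (i.e., μ ∈ M(X × X)_{⪰0}) if and only if μ(g ⊗ g) − v_g^T A^{-1} v_g ≥ 0 for all g ∈ F. -/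
open MeasureTheory Set Topology
open scoped NNReal ENNReal

noncomputable section

universe u

variable {V : Type u}

/-- The pairing of a signed measure with a (bounded) function, via the Jordan
decomposition: `μ(f) = ∫ f dμ⁺ − ∫ f dμ⁻`. -/
def sintegral {X : Type*} [MeasurableSpace X] (μ : MeasureTheory.SignedMeasure X)
    (f : X → ℝ) : ℝ :=
  (∫ x, f x ∂μ.toJordanDecomposition.posPart) - ∫ x, f x ∂μ.toJordanDecomposition.negPart


/-!
Write `B(f, g) = μ(f ⊗ g)` for `f, g ∈ C(X)`. The Jordan parts of `μ` are invariant under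
`(x, y) ↦ (y, x)` (by uniqueness of the Jordan decomposition), so `B` is a symmetric bilinear
form, and `μ` is positive definite iff `B(f, f) ≥ 0` for all `f`: each `f ⊗ f` is a positive
definite kernel, and conversely a positive definite `K` is a uniform limit of the kernels
`∑ₖₗ K(yₖ, yₗ) ρₖ ⊗ ρₗ` over finer and finer partitions of unity `ρ`, which are sums of squares
`∑ⱼ fⱼ ⊗ fⱼ` because the matrix `(K(yₖ, yₗ))` is positive semidefinite.

The indicators `eᵢ` of the isolated points have Gram matrix `A` under `B`, and every `f` is
`g + ∑ᵢ f(xᵢ) eᵢ` with `g ∈ F`. Hence `B ≥ 0` iff the Gram matrices `[A v_g; v_gᵀ B(g, g)]` of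
`(e₁, …, eₙ, g)` are positive semidefinite for all `g ∈ F`, and by the Schur complement theorem
this is `v_gᵀ A⁻¹ v_g ≤ B(g, g)`.
-/

namespace LinearMap.BilinForm

open Matrix

section CommRing

variable {R E ι : Type*} [CommRing R] [AddCommGroup E] [Module R E]

def gram (B : LinearMap.BilinForm R E) (v : ι → E) : Matrix ι ι R :=
  Matrix.of fun i j => B (v i) (v j)

@[simp] lemma gram_apply (B : LinearMap.BilinForm R E) (v : ι → E) (i j : ι) :
    B.gram v i j = B (v i) (v j) := rfl

lemma dotProduct_gram_mulVec [Fintype ι] (B : LinearMap.BilinForm R E) (v : ι → E)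
    (c : ι → R) :
    c ⬝ᵥ B.gram v *ᵥ c = B (∑ i, c i • v i) (∑ i, c i • v i) := by
  simp only [dotProduct, mulVec, gram_apply, map_sum, map_smul, LinearMap.sum_apply,
    LinearMap.smul_apply, smul_eq_mul, Finset.mul_sum]
  rw [Finset.sum_comm]
  exact Finset.sum_congr rfl fun i _ => Finset.sum_congr rfl fun j _ => by ring

lemma gram_sum_elim_unit [StarRing R] [TrivialStar R] {B : LinearMap.BilinForm R E}
    (hB : B.IsSymm) (v : ι → E) (g : E) :
    B.gram (Sum.elim v fun _ : Unit => g) =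
      fromBlocks (B.gram v) (replicateCol Unit fun i => B (v i) g)
        (replicateCol Unit fun i => B (v i) g)ᴴ (of fun _ _ => B g g) := by
  ext (i | i) (j | j) <;> simp [hB.eq g]

end CommRing

variable {E ι : Type*} [AddCommGroup E] [Module ℝ E]

lemma isHermitian_gram {B : LinearMap.BilinForm ℝ E} (hB : B.IsSymm) (v : ι → E) :
    (B.gram v).IsHermitian :=
  Matrix.ext fun i j => hB.eq (v j) (v i)

variable [Fintype ι]

lemma posSemidef_gram_iff {B : LinearMap.BilinForm ℝ E} (hB : B.IsSymm) (v : ι → E) :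
    (B.gram v).PosSemidef ↔
      ∀ c : ι → ℝ, 0 ≤ B (∑ i, c i • v i) (∑ i, c i • v i) := by
  simp only [posSemidef_iff_dotProduct_mulVec, isHermitian_gram hB, true_and, star_trivial,
    dotProduct_gram_mulVec]

lemma linearIndependent_of_posDef_gram {B : LinearMap.BilinForm ℝ E} {v : ι → E}
    (hv : (B.gram v).PosDef) : LinearIndependent ℝ v := by
  refine Fintype.linearIndependent_iff.mpr fun c hc => ?_
  by_contra hne
  have := hv.dotProduct_mulVec_pos (x := c) fun h => hne (congrFun h)
  rw [star_trivial, dotProduct_gram_mulVec, hc] at this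
  simp at this

lemma posSemidef_gram_sum_elim_unit_iff [DecidableEq ι] {B : LinearMap.BilinForm ℝ E}
    (hB : B.IsSymm) {v : ι → E} (hv : (B.gram v).PosDef) (g : E) :
    (B.gram (Sum.elim v fun _ : Unit => g)).PosSemidef ↔
      (fun i => B (v i) g) ⬝ᵥ (B.gram v)⁻¹ *ᵥ (fun i => B (v i) g) ≤ B g g := by
  have := hv.isUnit.invertible
  rw [gram_sum_elim_unit hB, PosDef.fromBlocks₁₁ _ _ hv]
  have hunit : ∀ M : Matrix Unit Unit ℝ, M = diagonal fun u => M u u := fun M => by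
    ext ⟨⟩ ⟨⟩; simp
  rw [hunit (_ - _), posSemidef_diagonal_iff, dotProduct_mulVec]
  simp [Matrix.mul_apply, vecMul, dotProduct]

theorem nonneg_iff_forall_schur [DecidableEq ι] {B : LinearMap.BilinForm ℝ E} (hB : B.IsSymm)
    {v : ι → E} (hv : (B.gram v).PosDef) {F : Set E}
    (hF : ∀ f, ∃ g ∈ F, ∃ c : ι → ℝ, f = g + ∑ i, c i • v i) :
    (∀ f, 0 ≤ B f f) ↔
      ∀ g ∈ F,
        (fun i => B (v i) g) ⬝ᵥ (B.gram v)⁻¹ *ᵥ (fun i => B (v i) g) ≤ B g g := by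
  refine ⟨fun h g _ => ?_, fun h f => ?_⟩
  · rw [← posSemidef_gram_sum_elim_unit_iff hB hv, posSemidef_gram_iff hB]
    exact fun _ => h _
  · obtain ⟨g, hg, c, rfl⟩ := hF f
    have := (posSemidef_gram_iff hB _).1 ((posSemidef_gram_sum_elim_unit_iff hB hv g).2 (h g hg))
      (Sum.elim c 1)
    simpa [Fintype.sum_sum_type, add_comm] using this

end LinearMap.BilinForm

namespace ContinuousMap

variable {X Y : Type*} [TopologicalSpace X] [TopologicalSpace Y]

def tensor : C(X, ℝ) →ₗ[ℝ] C(Y, ℝ) →ₗ[ℝ] C(X × Y, ℝ) :=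
  LinearMap.mk₂ ℝ (fun f g => f.comp fst * g.comp snd)
    (fun _ _ _ => by ext; simp [add_mul]) (fun _ _ _ => by ext; simp)
    (fun _ _ _ => by ext; simp [mul_add]) (fun _ _ _ => by ext; simp)

@[simp] lemma tensor_apply (f : C(X, ℝ)) (g : C(Y, ℝ)) (p : X × Y) :
    tensor f g p = f p.1 * g p.2 := rfl

def clopenIndicator {s : Set X} (hs : IsClopen s) : C(X, ℝ) :=
  ⟨s.indicator 1, hs.continuous_indicator continuous_const⟩

@[simp] lemma clopenIndicator_apply {s : Set X} (hs : IsClopen s) (x : X) :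
    clopenIndicator hs x = s.indicator 1 x := rfl

variable [CompactSpace X] [T2Space X] [MeasurableSpace X] [BorelSpace X]
  [CompactSpace Y] [T2Space Y] [MeasurableSpace Y] [BorelSpace Y]

omit [MeasurableSpace X] [BorelSpace X] in
lemma exists_apply_ne_of_ne {x₁ x₂ : X} (h : x₁ ≠ x₂) :
    ∃ f : C(X, ℝ), f x₁ ≠ f x₂ := by
  obtain ⟨f, hf₁, hf₂, -⟩ := exists_continuous_zero_one_of_isClosed isClosed_singleton
    isClosed_singleton (Set.disjoint_singleton.2 h)
  exact ⟨f, by simp [hf₁ rfl, hf₂ rfl]⟩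

-- The σ-algebra on `X × Y` is the product one, which can be smaller than the Borel σ-algebra
-- when `X` is not second countable; by Stone–Weierstrass, continuous functions are nevertheless
-- uniform limits of polynomials in functions of one coordinate.
theorem measurable_of_compactSpace_prod (K : C(X × Y, ℝ)) : Measurable K := by
  let S : Subalgebra ℝ C(X × Y, ℝ) :=
    { carrier := {K | Measurable K}
      mul_mem' := fun hf hg => hf.mul hg
      add_mem' := fun hf hg => hf.add hg
      algebraMap_mem' := fun _ => measurable_const }
  have hclosed : IsClosed (S : Set C(X × Y, ℝ)) := by
    refine IsSeqClosed.isClosed fun K' K hK' hlim => ?_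
    exact measurable_of_tendsto_metrizable hK'
      (tendsto_pi_nhds.2 fun p => ((continuous_eval_const p).tendsto K).comp hlim)
  have hsep : S.SeparatesPoints := by
    rintro ⟨a, b⟩ ⟨a', b'⟩ hne
    by_cases ha : a = a'
    · obtain ⟨f, hf⟩ := exists_apply_ne_of_ne fun hb : b = b' => hne (by rw [ha, hb])
      exact ⟨_, ⟨f.comp snd, (f.continuous.measurable.comp measurable_snd), rfl⟩, hf⟩
    · obtain ⟨f, hf⟩ := exists_apply_ne_of_ne ha
      exact ⟨_, ⟨f.comp fst, (f.continuous.measurable.comp measurable_fst), rfl⟩, hf⟩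
  have hK := continuousMap_mem_subalgebra_closure_of_separatesPoints S hsep K
  rwa [← SetLike.mem_coe, Subalgebra.topologicalClosure_coe, hclosed.closure_eq] at hK

end ContinuousMap

namespace MeasureTheory.SignedMeasure

section Pairing

variable {Y : Type*} [TopologicalSpace Y] [CompactSpace Y] [MeasurableSpace Y]

lemma _root_.ContinuousMap.integrable_of_measurable {K : C(Y, ℝ)} (hK : Measurable K)
    (ν : Measure Y) [IsFiniteMeasure ν] : Integrable K ν :=
  Integrable.of_bound hK.aestronglyMeasurable ‖K‖ (ae_of_all _ K.norm_coe_le_norm)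

def sintegralCLM (μ : SignedMeasure Y) (hmeas : ∀ K : C(Y, ℝ), Measurable K) :
    C(Y, ℝ) →L[ℝ] ℝ :=
  LinearMap.mkContinuous
    { toFun := fun K => sintegral μ K
      map_add' := fun K K' => by
        simp only [sintegral, ContinuousMap.coe_add, Pi.add_apply]
        rw [integral_add, integral_add] <;>
          first | ring | exact ContinuousMap.integrable_of_measurable (hmeas _) _
      map_smul' := fun c K => by
        simp only [sintegral, ContinuousMap.coe_smul, Pi.smul_apply, smul_eq_mul, RingHom.id_apply]
        rw [integral_const_mul, integral_const_mul, mul_sub] }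
    (μ.totalVariation.real univ) fun K => by
      have hP := norm_integral_le_of_norm_le_const (μ := μ.toJordanDecomposition.posPart)
        (ae_of_all _ K.norm_coe_le_norm)
      have hN := norm_integral_le_of_norm_le_const (μ := μ.toJordanDecomposition.negPart)
        (ae_of_all _ K.norm_coe_le_norm)
      calc ‖sintegral μ K‖ ≤ _ := norm_sub_le _ _
        _ ≤ _ := add_le_add hP hN
        _ = μ.totalVariation.real univ * ‖K‖ := by
          rw [totalVariation, measureReal_add_apply]; ring

end Pairing

section Swap

variable {X : Type*} [MeasurableSpace X]

lemma apply_eq_measureReal_posPart_sub (μ : SignedMeasure X) {s : Set X} (hs : MeasurableSet s) :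
    μ s = μ.toJordanDecomposition.posPart.real s - μ.toJordanDecomposition.negPart.real s := by
  conv_lhs => rw [← μ.toSignedMeasure_toJordanDecomposition]
  rw [JordanDecomposition.toSignedMeasure, Measure.toSignedMeasure_sub_apply hs]

lemma sintegral_indicator_one (μ : SignedMeasure X) {s : Set X} (hs : MeasurableSet s) :
    sintegral μ (s.indicator 1) = μ s := by
  rw [sintegral, integral_indicator_one hs, integral_indicator_one hs,
    apply_eq_measureReal_posPart_sub μ hs]

variable {μ : SignedMeasure (X × X)}
  (hsym : ∀ E E' : Set X, MeasurableSet E → MeasurableSet E' →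
    μ (E ×ˢ E') = μ (E' ×ˢ E))
include hsym

lemma posPart_add_map_swap_negPart :
    μ.toJordanDecomposition.posPart + μ.toJordanDecomposition.negPart.map Prod.swap =
      μ.toJordanDecomposition.negPart + μ.toJordanDecomposition.posPart.map Prod.swap := by
  set P := μ.toJordanDecomposition.posPart
  set N := μ.toJordanDecomposition.negPart
  have hrect : ∀ E E' : Set X, MeasurableSet E → MeasurableSet E' →
      (P + N.map Prod.swap) (E ×ˢ E') = (N + P.map Prod.swap) (E ×ˢ E') := by
    intro E E' hE hE'
    have h := hsym E E' hE hE'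
    rw [apply_eq_measureReal_posPart_sub μ (hE.prod hE'),
      apply_eq_measureReal_posPart_sub μ (hE'.prod hE)] at h
    simp only [Measure.add_apply, Measure.map_apply measurable_swap (hE.prod hE'),
      preimage_swap_prod]
    rw [← ENNReal.toReal_eq_toReal_iff' (by finiteness) (by finiteness),
      ENNReal.toReal_add (by finiteness) (by finiteness),
      ENNReal.toReal_add (by finiteness) (by finiteness)]
    simp only [measureReal_def] at h
    linarith
  refine ext_of_generate_finite _ generateFrom_prod.symm isPiSystem_prod ?_ ?_
  · rintro _ ⟨E, hE, E', hE', rfl⟩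
    exact hrect E E' hE hE'
  · simpa using hrect univ univ MeasurableSet.univ MeasurableSet.univ

lemma map_swap_posPart_and_negPart :
    μ.toJordanDecomposition.posPart.map Prod.swap = μ.toJordanDecomposition.posPart ∧
      μ.toJordanDecomposition.negPart.map Prod.swap = μ.toJordanDecomposition.negPart := by
  set j := μ.toJordanDecomposition
  let j' : JordanDecomposition (X × X) :=
    { posPart := j.posPart.map Prod.swap
      negPart := j.negPart.map Prod.swap
      mutuallySingular :=
        MeasurableEquiv.prodComm.measurableEmbedding.mutuallySingular_map j.mutuallySingular }
  have hj : j' = j := by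
    refine JordanDecomposition.toSignedMeasure_injective ?_
    rw [μ.toSignedMeasure_toJordanDecomposition]
    ext s hs
    have h := congrArg (fun ν => ν.real s) (posPart_add_map_swap_negPart hsym)
    rw [measureReal_add_apply, measureReal_add_apply] at h
    rw [JordanDecomposition.toSignedMeasure, Measure.toSignedMeasure_sub_apply hs,
      apply_eq_measureReal_posPart_sub μ hs]
    change (j.posPart.map Prod.swap).real s - (j.negPart.map Prod.swap).real s = _
    linarith
  exact ⟨congrArg JordanDecomposition.posPart hj, congrArg JordanDecomposition.negPart hj⟩

lemma sintegral_comp_swap (F : X × X → ℝ) :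
    sintegral μ (fun p => F p.swap) = sintegral μ F := by
  obtain ⟨hP, hN⟩ := map_swap_posPart_and_negPart hsym
  have h := fun ν : Measure (X × X) =>
    integral_map_equiv (MeasurableEquiv.prodComm (α := X) (β := X)) F (μ := ν)
  unfold sintegral
  conv_rhs => rw [← hP, ← hN]
  exact congrArg₂ (· - ·) (h _).symm (h _).symm

end Swap

end MeasureTheory.SignedMeasure

lemma abs_sub_sum_mul_le {ι : Type*} (s : Finset ι) {w z : ι → ℝ} {a ε : ℝ}
    (hw : ∀ i ∈ s, 0 ≤ w i) (hw₁ : ∑ i ∈ s, w i = 1)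
    (hz : ∀ i ∈ s, w i ≠ 0 → |a - z i| ≤ ε) : |a - ∑ i ∈ s, w i * z i| ≤ ε := by
  have hsplit : a - ∑ i ∈ s, w i * z i = ∑ i ∈ s, w i * (a - z i) := by
    simp only [mul_sub, Finset.sum_sub_distrib, ← Finset.sum_mul, hw₁, one_mul]
  calc |a - ∑ i ∈ s, w i * z i| ≤ ∑ i ∈ s, |w i * (a - z i)| :=
        hsplit ▸ Finset.abs_sum_le_sum_abs _ _
    _ ≤ ∑ i ∈ s, w i * ε := Finset.sum_le_sum fun i hi => by
        rw [abs_mul, abs_of_nonneg (hw i hi)]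
        rcases eq_or_ne (w i) 0 with h | h
        · simp [h]
        · exact mul_le_mul_of_nonneg_left (hz i hi h) (hw i hi)
    _ = ε := by rw [← Finset.sum_mul, hw₁, one_mul]

section PartitionOfUnity

open Uniformity

variable {X : Type*} [TopologicalSpace X] [CompactSpace X] [T2Space X]

theorem exists_partitionOfUnity_oscillation_le (K : C(X × X, ℝ)) {ε : ℝ} (hε : 0 < ε) :
    ∃ (t : Finset X) (ρ : PartitionOfUnity t X univ), ∀ (a b : X) (k l : t),
      ρ k a ≠ 0 → ρ l b ≠ 0 → |K (a, b) - K (k, l)| ≤ ε := by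
  let _ : UniformSpace X := uniformSpaceOfCompactR1
  have hK : UniformContinuous K := CompactSpace.uniformContinuous_of_continuous K.continuous
  obtain ⟨W, hW, hWo, hWK⟩ : ∃ W ∈ 𝓤 X, IsOpen W ∧
      ∀ a a' b b', (a, a') ∈ W → (b, b') ∈ W → dist (K (a, b)) (K (a', b')) < ε := by
    have : {q : (X × X) × (X × X) | dist (K q.1) (K q.2) < ε} ∈ 𝓤 (X × X) :=
      hK (Metric.dist_mem_uniformity hε)
    rw [uniformity_prod_eq_comap_prod, Filter.mem_comap] at this
    obtain ⟨T, hT, hTK⟩ := this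
    obtain ⟨W₁, hW₁, W₂, hW₂, hW⟩ := Filter.mem_prod_iff.mp hT
    obtain ⟨W, ⟨hWmem, hWopen⟩, hWsub⟩ :=
      (uniformity_hasBasis_open (α := X)).mem_iff.mp (Filter.inter_mem hW₁ hW₂)
    exact ⟨W, hWmem, hWopen, fun a a' b b' ha hb =>
      @hTK ((a, b), (a', b')) (hW ⟨(hWsub ha).1, (hWsub hb).2⟩)⟩
  obtain ⟨t, ht⟩ := isCompact_univ.elim_finite_subcover (fun z : X => UniformSpace.ball z W)
    (fun z => UniformSpace.isOpen_ball z hWo)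
    (fun z _ => mem_iUnion.2 ⟨z, UniformSpace.mem_ball_self z hW⟩)
  obtain ⟨ρ, hρ⟩ := PartitionOfUnity.exists_isSubordinate isClosed_univ
    (fun k : t => UniformSpace.ball (k : X) W) (fun k => UniformSpace.isOpen_ball _ hWo)
    (by simpa [iUnion_subtype] using ht)
  refine ⟨t, ρ, fun a b k l hka hlb => ?_⟩
  have h := hWK k a l b (hρ k (subset_tsupport _ hka)) (hρ l (subset_tsupport _ hlb))
  rw [dist_comm, Real.dist_eq] at h
  exact h.le

end PartitionOfUnity

namespace ContinuousMap

variable {X : Type*} [TopologicalSpace X]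

variable (X) in
def sumsOfTensorSquares : AddSubmonoid C(X × X, ℝ) :=
  AddSubmonoid.closure (range fun f : C(X, ℝ) => tensor f f)

lemma isPosDefKernel_tensor_self (f : C(X, ℝ)) : IsPosDefKernel (tensor f f) := by
  refine ⟨fun a b => mul_comm _ _, fun m y c => ?_⟩
  have hsq : ∑ i : Fin m, ∑ j : Fin m, c i * c j * tensor f f (y i, y j) =
      (∑ i, c i * f (y i)) ^ 2 := by
    rw [sq, Finset.sum_mul_sum]
    exact Finset.sum_congr rfl fun i _ => Finset.sum_congr rfl fun j _ => by simp; ring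
  exact hsq ▸ sq_nonneg _

lemma _root_.IsPosDefKernel.posSemidef {K : C(X × X, ℝ)} (hK : IsPosDefKernel K)
    {ι : Type*} [Fintype ι] (y : ι → X) : (Matrix.of fun k l => K (y k, y l)).PosSemidef := by
  have hfin : ∀ {m : ℕ} (y : Fin m → X), (Matrix.of fun k l => K (y k, y l)).PosSemidef :=
    fun y => Matrix.posSemidef_iff_dotProduct_mulVec.2
      ⟨Matrix.ext fun k l => hK.1 (y l) (y k), fun c => by
        simpa [dotProduct, Matrix.mulVec, Finset.mul_sum, mul_assoc, mul_comm] using hK.2 _ y c⟩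
  convert (hfin (y ∘ (Fintype.equivFin ι).symm)).submatrix (Fintype.equivFin ι) using 1
  ext
  simp

lemma sum_smul_tensor_mem_sumsOfTensorSquares {ι : Type*} [Fintype ι] {M : Matrix ι ι ℝ}
    (hM : M.PosSemidef) (ρ : ι → C(X, ℝ)) :
    ∑ k, ∑ l, M k l • tensor (ρ k) (ρ l) ∈ sumsOfTensorSquares X := by
  classical
  open scoped MatrixOrder in
  obtain ⟨C, rfl⟩ := CStarAlgebra.nonneg_iff_eq_star_mul_self.mp hM.nonneg
  have : ∑ k, ∑ l, (star C * C) k l • tensor (ρ k) (ρ l) =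
      ∑ j, tensor (∑ k, C j k • ρ k) (∑ k, C j k • ρ k) := by
    simp only [map_sum, map_smul, LinearMap.sum_apply, LinearMap.smul_apply, Finset.smul_sum,
      smul_smul, Matrix.mul_apply, Matrix.star_apply, star_trivial, Finset.sum_smul]
    conv_lhs => enter [2, k]; rw [Finset.sum_comm]
    rw [Finset.sum_comm]
    refine Finset.sum_congr rfl fun j _ => ?_
    rw [Finset.sum_comm]
    exact Finset.sum_congr rfl fun _ _ => Finset.sum_congr rfl fun _ _ => by rw [mul_comm]
  rw [this]
  exact sum_mem fun j _ => AddSubmonoid.subset_closure ⟨_, rfl⟩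

variable [CompactSpace X] [T2Space X]

theorem _root_.IsPosDefKernel.mem_closure_sumsOfTensorSquares {K : C(X × X, ℝ)}
    (hK : IsPosDefKernel K) : K ∈ closure (sumsOfTensorSquares X : Set C(X × X, ℝ)) := by
  refine Metric.mem_closure_iff.2 fun ε hε => ?_
  obtain ⟨t, ρ, hρ⟩ := exists_partitionOfUnity_oscillation_le K (half_pos hε)
  refine ⟨_, sum_smul_tensor_mem_sumsOfTensorSquares (hK.posSemidef fun k : t => (k : X))
    fun k => ρ k, ?_⟩
  refine lt_of_le_of_lt ((ContinuousMap.dist_le (half_pos hε).le).2 fun ⟨a, b⟩ => ?_)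
    (half_lt_self hε)
  have hρ₁ : ∀ z, ∑ k, ρ k z = 1 := fun z => by
    simpa [finsum_eq_sum_of_fintype] using ρ.sum_eq_one (mem_univ z)
  have := abs_sub_sum_mul_le (Finset.univ : Finset (t × t)) (a := K (a, b))
    (w := fun q => ρ q.1 a * ρ q.2 b) (z := fun q => K (q.1, q.2))
    (fun q _ => mul_nonneg (ρ.nonneg _ _) (ρ.nonneg _ _))
    (by simp only [Fintype.sum_prod_type, ← Finset.sum_mul_sum, hρ₁, one_mul])
    (fun q _ hq => hρ a b q.1 q.2 (left_ne_zero_of_mul hq) (right_ne_zero_of_mul hq))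
  rw [Real.dist_eq]
  simpa [Fintype.sum_prod_type, mul_comm] using this

theorem _root_.forall_isPosDefKernel_nonneg_iff (L : C(X × X, ℝ) →L[ℝ] ℝ) :
    (∀ K, IsPosDefKernel K → 0 ≤ L K) ↔ ∀ f, 0 ≤ L (tensor f f) := by
  refine ⟨fun h f => h _ (isPosDefKernel_tensor_self f), fun h K hK => ?_⟩
  have hcone : (sumsOfTensorSquares X : Set C(X × X, ℝ)) ⊆ {K | 0 ≤ L K} := fun K hK =>
    AddSubmonoid.closure_induction (by rintro _ ⟨f, rfl⟩; exact h f) (by simp)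
      (fun _ _ _ _ h₁ h₂ => by
        simpa only [mem_ofPred_eq, map_add] using add_nonneg h₁ h₂) hK
  exact closure_minimal hcone (isClosed_le continuous_const L.continuous)
    hK.mem_closure_sumsOfTensorSquares

end ContinuousMap

namespace MeasureTheory.SignedMeasure

variable {X : Type*} [TopologicalSpace X] [CompactSpace X] [T2Space X] [MeasurableSpace X]
  [BorelSpace X]

def tensorForm (μ : SignedMeasure (X × X)) : LinearMap.BilinForm ℝ C(X, ℝ) :=
  ContinuousMap.tensor.compr₂
    (μ.sintegralCLM ContinuousMap.measurable_of_compactSpace_prod).toLinearMap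

lemma tensorForm_apply (μ : SignedMeasure (X × X)) (f g : C(X, ℝ)) :
    μ.tensorForm f g = sintegral μ (fun p => f p.1 * g p.2) := rfl

lemma isSymm_tensorForm {μ : SignedMeasure (X × X)}
    (hsym : ∀ E E' : Set X, MeasurableSet E → MeasurableSet E' →
      μ (E ×ˢ E') = μ (E' ×ˢ E)) :
    μ.tensorForm.IsSymm :=
  ⟨fun f g => by
    simpa [tensorForm_apply, mul_comm] using
      (sintegral_comp_swap hsym fun p => f p.1 * g p.2).symm⟩

lemma tensorForm_clopenIndicator (μ : SignedMeasure (X × X)) {s t : Set X} (hs : IsClopen s)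
    (ht : IsClopen t) :
    μ.tensorForm (.clopenIndicator hs) (.clopenIndicator ht) = μ (s ×ˢ t) := by
  rw [tensorForm_apply,
    ← sintegral_indicator_one μ (hs.isOpen.measurableSet.prod ht.isOpen.measurableSet)]
  congr 1
  funext p
  exact indicator_prod_one.symm

end MeasureTheory.SignedMeasure

open Matrix in
theorem generalized_schur_complement_for_measures_general
    {X : Type*} [TopologicalSpace X] [CompactSpace X] [T2Space X]
    [MeasurableSpace X] [BorelSpace X]
    (n : ℕ) (x : Fin n → X) (hx : ∀ i, IsOpen {x i})
    (μ : MeasureTheory.SignedMeasure (X × X))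
    (hsym : ∀ E E' : Set X, MeasurableSet E → MeasurableSet E' →
      μ (E ×ˢ E') = μ (E' ×ˢ E))
    (A : Matrix (Fin n) (Fin n) ℝ) (hA : ∀ i j, A i j = μ {(x i, x j)})
    (hApd : A.PosDef) :
    (∀ K : C(X × X, ℝ), IsPosDefKernel K → 0 ≤ sintegral μ (fun p => K p)) ↔
    ∀ g : X → ℝ, Continuous g → (∀ i, g (x i) = 0) →
      (fun i => sintegral μ (fun p => Set.indicator {x i} (fun _ => (1 : ℝ)) p.1 * g p.2)) ⬝ᵥ
          A⁻¹ *ᵥ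
          (fun i => sintegral μ (fun p => Set.indicator {x i} (fun _ => (1 : ℝ)) p.1 * g p.2))
        ≤ sintegral μ (fun p => g p.1 * g p.2) := by
  have hB : μ.tensorForm.IsSymm := SignedMeasure.isSymm_tensorForm hsym
  have hclopen : ∀ i, IsClopen {x i} := fun i => ⟨isClosed_singleton, hx i⟩
  let e : Fin n → C(X, ℝ) := fun i => .clopenIndicator (hclopen i)
  have hgram : μ.tensorForm.gram e = A := Matrix.ext fun i j => by
    rw [hA, LinearMap.BilinForm.gram_apply, SignedMeasure.tensorForm_clopenIndicator,
      singleton_prod_singleton]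
  have hApd' : (μ.tensorForm.gram e).PosDef := hgram ▸ hApd
  have hxinj : Function.Injective x := fun i j h =>
    (LinearMap.BilinForm.linearIndependent_of_posDef_gram hApd').injective (by simp [e, h])
  have hF : ∀ f : C(X, ℝ), ∃ g ∈ {g : C(X, ℝ) | ∀ i, g (x i) = 0},
      ∃ c : Fin n → ℝ, f = g + ∑ i, c i • e i := fun f =>
    ⟨f - ∑ i, f (x i) • e i, fun j => by classical simp [e, Pi.single_apply, hxinj.eq_iff],
      fun i => f (x i), by abel⟩
  rw [← hgram]
  refine (forall_isPosDefKernel_nonneg_iff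
    (μ.sintegralCLM ContinuousMap.measurable_of_compactSpace_prod)).trans
    ((LinearMap.BilinForm.nonneg_iff_forall_schur hB hApd' hF).trans ?_)
  exact ⟨fun h g hg hg0 => h ⟨g, hg⟩ hg0, fun h g hg0 => h g g.continuous hg0⟩

open Matrix in
/-- **generalized Schur complement for measures.**  Let `X` be a compact
Hausdorff space, `x₁, …, xₙ ∈ X` points whose singletons are open, and `μ` a symmetric
signed Radon measure on `X × X` such that `A = (μ({(xᵢ, xⱼ)}))ᵢⱼ` is positive definite.
With `F ⊆ C(X)` the continuous functions vanishing on `{x₁, …, xₙ}` and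
`(v_g)ᵢ = μ(1_{xᵢ} ⊗ g)`, the measure `μ` is positive definite (lies in the dual cone of
the positive definite continuous kernels) if and only if
`μ(g ⊗ g) − v_gᵀ A⁻¹ v_g ≥ 0` for all `g ∈ F`. -/
theorem generalized_schur_complement_for_measures
    {X : Type*} [TopologicalSpace X] [CompactSpace X] [T2Space X]
    [MeasurableSpace X] [BorelSpace X]
    (n : ℕ) (x : Fin n → X) (hx : ∀ i, IsOpen {x i})
    (μ : MeasureTheory.SignedMeasure (X × X))
    (hsym : ∀ E E' : Set X, MeasurableSet E → MeasurableSet E' →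
      μ (E ×ˢ E') = μ (E' ×ˢ E))
    (hreg : μ.toJordanDecomposition.posPart.Regular ∧
      μ.toJordanDecomposition.negPart.Regular)
    (A : Matrix (Fin n) (Fin n) ℝ) (hA : ∀ i j, A i j = μ {(x i, x j)})
    (hApd : A.PosDef) :
    (∀ K : C(X × X, ℝ), IsPosDefKernel K → 0 ≤ sintegral μ (fun p => K p)) ↔
    ∀ g : X → ℝ, Continuous g → (∀ i, g (x i) = 0) →
      (fun i => sintegral μ (fun p => Set.indicator {x i} (fun _ => (1 : ℝ)) p.1 * g p.2)) ⬝ᵥ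
          A⁻¹ *ᵥ
          (fun i => sintegral μ (fun p => Set.indicator {x i} (fun _ => (1 : ℝ)) p.1 * g p.2))
        ≤ sintegral μ (fun p => g p.1 * g p.2) :=
  generalized_schur_complement_for_measures_general n x hx μ hsym A hA hApd

end
end
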